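/- Under the standing assumption, let U ∈ M^φ̂ with U ≥ 1 a.s., and define g_U(Z) = φ₀*(Z/U) = sup_{ξ ∈ L^∞}(𝔼[ξZ/U] − φ₀(ξ)) for Z ∈ L¹. Then g_U is coercive: lim_{‖Z‖₁ → ∞} g_U(Z)/‖Z‖₁ = +∞. -/

import Mathlib

open MeasureTheory Filter Topology
open scoped ENNReal

noncomputable section

namespace MaxLebExt

variable {Ω : Type*} [MeasurableSpace Ω]

/-- Membership in `L^∞(μ)`. -/
def MemLinf (μ : Measure Ω) (X : Ω → ℝ) : Prop :=
  MemLp X ⊤ μ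

/-- Extended-real-valued expectation `𝔼[f] ∈ [-∞,∞]`, defined as the integral of the
positive part minus the integral of the negative part. -/
def eE (μ : Measure Ω) (f : Ω → ℝ) : EReal :=
  ((∫⁻ ω, ENNReal.ofReal (f ω) ∂μ : ℝ≥0∞) : EReal) -
    ((∫⁻ ω, ENNReal.ofReal (-f ω) ∂μ : ℝ≥0∞) : EReal)

/-- The conjugate `φ*(Z) = sup_{X ∈ L^∞} (𝔼[XZ] - φ(X)) ∈ (-∞,∞]` of a function `φ`
defined (at least) on `L^∞`. -/
def conj (μ : Measure Ω) (φ : (Ω → ℝ) → ℝ) (Z : Ω → ℝ) : EReal :=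
  ⨆ X : {X : Ω → ℝ // MemLinf μ X}, (((∫ ω, X.1 ω * Z ω ∂μ) - φ X.1 : ℝ) : EReal)

/-- `Z ∈ dom φ* = {Z ∈ L¹ : φ*(Z) < ∞}`. -/
def MemDom (μ : Measure Ω) (φ : (Ω → ℝ) → ℝ) (Z : Ω → ℝ) : Prop :=
  Integrable Z μ ∧ conj μ φ Z < ⊤

/-- `X ∈ 𝒟₀ = {X ∈ L⁰ : X⁻ Z ∈ L¹ for all Z ∈ dom φ*}`. -/
def MemD0 (μ : Measure Ω) (φ : (Ω → ℝ) → ℝ) (X : Ω → ℝ) : Prop :=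
  AEStronglyMeasurable X μ ∧
    ∀ Z : Ω → ℝ, MemDom μ φ Z → Integrable (fun ω => max (-(X ω)) 0 * Z ω) μ

/-- The canonical extension `φ̂(X) = sup_{Z ∈ dom φ*} (𝔼[XZ] - φ*(Z))`. -/
def hatphi (μ : Measure Ω) (φ : (Ω → ℝ) → ℝ) (X : Ω → ℝ) : EReal :=
  ⨆ Z : {Z : Ω → ℝ // MemDom μ φ Z},
    (eE μ (fun ω => X ω * Z.1 ω) - conj μ φ Z.1)

/-- The truncated tail `α|X| 1_{{|X| > N}}`. -/
def tailFn (X : Ω → ℝ) (α : ℝ) (N : ℕ) : Ω → ℝ :=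
  Set.indicator {ω | (N : ℝ) < |X ω|} fun ω => α * |X ω|

/-- `X ∈ M^φ̂_u`. -/
def MemMu (μ : Measure Ω) (φ : (Ω → ℝ) → ℝ) (X : Ω → ℝ) : Prop :=
  AEStronglyMeasurable X μ ∧
    ∀ α : ℝ, 0 < α →
      Tendsto (fun N : ℕ => hatphi μ φ (tailFn X α N)) atTop (𝓝 (0 : EReal))

/-- `X ∈ M^φ̂` (the Orlicz heart of `φ̂`). -/
def MemM (μ : Measure Ω) (φ : (Ω → ℝ) → ℝ) (X : Ω → ℝ) : Prop :=
  AEStronglyMeasurable X μ ∧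
    ∀ α : ℝ, 0 < α → hatphi μ φ (fun ω => α * |X ω|) < ⊤

/-- A finite monotone convex function on `L^∞`, compatible with a.e. equality. -/
structure IsMCLinf (μ : Measure Ω) (φ : (Ω → ℝ) → ℝ) : Prop where
  congr : ∀ X Y : Ω → ℝ, MemLinf μ X → MemLinf μ Y → X =ᵐ[μ] Y → φ X = φ Y
  mono : ∀ X Y : Ω → ℝ, MemLinf μ X → MemLinf μ Y → X ≤ᵐ[μ] Y → φ X ≤ φ Y
  convex : ∀ X Y : Ω → ℝ, MemLinf μ X → MemLinf μ Y → ∀ t : ℝ, 0 ≤ t → t ≤ 1 →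
    φ (fun ω => t * X ω + (1 - t) * Y ω) ≤ t * φ X + (1 - t) * φ Y

/-- The Lebesgue property on `L^∞`. -/
def LebesgueLinf (μ : Measure Ω) (φ : (Ω → ℝ) → ℝ) : Prop :=
  ∀ (X : ℕ → Ω → ℝ) (X₀ : Ω → ℝ), (∀ n, MemLinf μ (X n)) → MemLinf μ X₀ →
    (∃ C : ℝ, ∀ n, ∀ᵐ ω ∂μ, |X n ω| ≤ C) →
    (∀ᵐ ω ∂μ, Tendsto (fun n => X n ω) atTop (𝓝 (X₀ ω))) →
    Tendsto (fun n => φ (X n)) atTop (𝓝 (φ X₀))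

/-- The Fatou property on `L^∞`. -/
def FatouLinf (μ : Measure Ω) (φ : (Ω → ℝ) → ℝ) : Prop :=
  ∀ (X : ℕ → Ω → ℝ) (X₀ : Ω → ℝ), (∀ n, MemLinf μ (X n)) → MemLinf μ X₀ →
    (∃ C : ℝ, ∀ n, ∀ᵐ ω ∂μ, |X n ω| ≤ C) →
    (∀ᵐ ω ∂μ, Tendsto (fun n => X n ω) atTop (𝓝 (X₀ ω))) →
    φ X₀ ≤ liminf (fun n => φ (X n)) atTop

/-- Standing assumption: `φ₀` is a finite monotone convex function on `L^∞` with the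
Lebesgue property and `φ₀(0) = 0`. -/
structure Standing (μ : Measure Ω) (φ₀ : (Ω → ℝ) → ℝ) : Prop where
  mc : IsMCLinf μ φ₀
  leb : LebesgueLinf μ φ₀
  zero : φ₀ 0 = 0

/-- A solid vector subspace (ideal) of `L⁰`. -/
structure IsSolidSpace (μ : Measure Ω) (S : Set (Ω → ℝ)) : Prop where
  aesm : ∀ X ∈ S, AEStronglyMeasurable X μ
  zero : (0 : Ω → ℝ) ∈ S
  add : ∀ X ∈ S, ∀ Y ∈ S, X + Y ∈ S
  smul : ∀ c : ℝ, ∀ X ∈ S, (fun ω => c * X ω) ∈ S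
  solid : ∀ X : Ω → ℝ, AEStronglyMeasurable X μ → ∀ Y ∈ S,
    (∀ᵐ ω ∂μ, |X ω| ≤ |Y ω|) → X ∈ S

/-- A finite monotone convex function on a solid space `S`. -/
structure IsMCOn (μ : Measure Ω) (S : Set (Ω → ℝ)) (ψ : (Ω → ℝ) → ℝ) : Prop where
  congr : ∀ X ∈ S, ∀ Y ∈ S, X =ᵐ[μ] Y → ψ X = ψ Y
  mono : ∀ X ∈ S, ∀ Y ∈ S, X ≤ᵐ[μ] Y → ψ X ≤ ψ Y
  convex : ∀ X ∈ S, ∀ Y ∈ S, ∀ t : ℝ, 0 ≤ t → t ≤ 1 →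
    ψ (fun ω => t * X ω + (1 - t) * Y ω) ≤ t * ψ X + (1 - t) * ψ Y

/-- The Lebesgue property on a solid space `S`. -/
def LebesgueOn (μ : Measure Ω) (S : Set (Ω → ℝ)) (ψ : (Ω → ℝ) → ℝ) : Prop :=
  ∀ (X : ℕ → Ω → ℝ) (X₀ Y : Ω → ℝ), (∀ n, X n ∈ S) → X₀ ∈ S → Y ∈ S →
    (∀ n, ∀ᵐ ω ∂μ, |X n ω| ≤ Y ω) →
    (∀ᵐ ω ∂μ, Tendsto (fun n => X n ω) atTop (𝓝 (X₀ ω))) →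
    Tendsto (fun n => ψ (X n)) atTop (𝓝 (ψ X₀))

/-- The Fatou property on a solid space `S`. -/
def FatouOn (μ : Measure Ω) (S : Set (Ω → ℝ)) (ψ : (Ω → ℝ) → ℝ) : Prop :=
  ∀ (X : ℕ → Ω → ℝ) (X₀ Y : Ω → ℝ), (∀ n, X n ∈ S) → X₀ ∈ S → Y ∈ S →
    (∀ n, ∀ᵐ ω ∂μ, |X n ω| ≤ Y ω) →
    (∀ᵐ ω ∂μ, Tendsto (fun n => X n ω) atTop (𝓝 (X₀ ω))) →
    ψ X₀ ≤ liminf (fun n => ψ (X n)) atTop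

/-- A proper monotone convex function with values in `(-∞,∞]` on a solid space `S`. -/
structure IsMCOnE (μ : Measure Ω) (S : Set (Ω → ℝ)) (φ : (Ω → ℝ) → EReal) : Prop where
  congr : ∀ X ∈ S, ∀ Y ∈ S, X =ᵐ[μ] Y → φ X = φ Y
  mono : ∀ X ∈ S, ∀ Y ∈ S, X ≤ᵐ[μ] Y → φ X ≤ φ Y
  convex : ∀ X ∈ S, ∀ Y ∈ S, ∀ t : ℝ, 0 < t → t < 1 →
    φ (fun ω => t * X ω + (1 - t) * Y ω) ≤ (t : EReal) * φ X + ((1 - t : ℝ) : EReal) * φ Y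
  ne_bot : ∀ X ∈ S, φ X ≠ ⊥
  exists_ne_top : ∃ X ∈ S, φ X ≠ ⊤

/-- The Lebesgue property on a solid space `S` for an extended-real-valued function. -/
def LebesgueOnE (μ : Measure Ω) (S : Set (Ω → ℝ)) (φ : (Ω → ℝ) → EReal) : Prop :=
  ∀ (X : ℕ → Ω → ℝ) (X₀ Y : Ω → ℝ), (∀ n, X n ∈ S) → X₀ ∈ S → Y ∈ S →
    (∀ n, ∀ᵐ ω ∂μ, |X n ω| ≤ Y ω) →
    (∀ᵐ ω ∂μ, Tendsto (fun n => X n ω) atTop (𝓝 (X₀ ω))) →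
    Tendsto (fun n => φ (X n)) atTop (𝓝 (φ X₀))

/-- `(φ, S)` is a Lebesgue extension of `(φ₀, L^∞)`. -/
structure IsLebExt (μ : Measure Ω) (φ₀ : (Ω → ℝ) → ℝ)
    (S : Set (Ω → ℝ)) (φ : (Ω → ℝ) → EReal) : Prop where
  solid : IsSolidSpace μ S
  linf_mem : ∀ X : Ω → ℝ, MemLinf μ X → X ∈ S
  mc : IsMCOnE μ S φ
  leb : LebesgueOnE μ S φ
  restrict : ∀ X : Ω → ℝ, MemLinf μ X → φ X = (φ₀ X : EReal)

/-- The gauge (Luxemburg-type) functional `‖X‖_φ̂ = inf {λ > 0 : φ̂(|X|/λ) ≤ 1}`,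
with `inf ∅ = +∞`. -/
def gauge (μ : Measure Ω) (φ : (Ω → ℝ) → ℝ) (X : Ω → ℝ) : EReal :=
  sInf {l : EReal | ∃ r : ℝ, 0 < r ∧ l = (r : EReal) ∧
    hatphi μ φ (fun ω => |X ω| / r) ≤ 1}

/-! If `φ₀*(Z/U) < ∞`, testing the conjugate against `X = -t 1_s` and letting `t → ∞` shows
`Z/U ≥ 0`, hence `Z ≥ 0`. The Fenchel–Young inequality for `φ̂` at `X = α|U|` then reads
`α‖Z‖₁ - φ̂(α|U|) ≤ φ₀*(Z/U)`, where `φ̂(α|U|) < ∞` because `U ∈ M^φ̂`; take `α > C`. -/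

section Conjugate

variable {μ : Measure Ω} {φ : (Ω → ℝ) → ℝ}

lemma integral_mul_sub_le_conj {X : Ω → ℝ} (hX : MemLinf μ X) (Z : Ω → ℝ) :
    (((∫ ω, X ω * Z ω ∂μ) - φ X : ℝ) : EReal) ≤ conj μ φ Z :=
  le_iSup (fun X : {X : Ω → ℝ // MemLinf μ X} =>
    (((∫ ω, X.1 ω * Z ω ∂μ) - φ X.1 : ℝ) : EReal)) ⟨X, hX⟩

lemma eE_mul_sub_conj_le_hatphi {Z : Ω → ℝ} (hZ : MemDom μ φ Z) (X : Ω → ℝ) :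
    eE μ (fun ω => X ω * Z ω) - conj μ φ Z ≤ hatphi μ φ X :=
  le_iSup (fun Z : {Z : Ω → ℝ // MemDom μ φ Z} =>
    eE μ (fun ω => X ω * Z.1 ω) - conj μ φ Z.1) ⟨Z, hZ⟩

lemma eE_congr_ae {f g : Ω → ℝ} (hfg : f =ᵐ[μ] g) : eE μ f = eE μ g := by
  have hpos : ∫⁻ ω, ENNReal.ofReal (f ω) ∂μ = ∫⁻ ω, ENNReal.ofReal (g ω) ∂μ :=
    lintegral_congr_ae (hfg.mono fun ω hω => by simp only [hω])
  have hneg : ∫⁻ ω, ENNReal.ofReal (-f ω) ∂μ = ∫⁻ ω, ENNReal.ofReal (-g ω) ∂μ :=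
    lintegral_congr_ae (hfg.mono fun ω hω => by simp only [hω])
  rw [eE, eE, hpos, hneg]

lemma eE_eq_integral {f : Ω → ℝ} (hf : Integrable f μ) (hf0 : 0 ≤ᵐ[μ] f) :
    eE μ f = ((∫ ω, f ω ∂μ : ℝ) : EReal) := by
  have hneg : ∫⁻ ω, ENNReal.ofReal (-f ω) ∂μ = 0 :=
    lintegral_eq_zero_of_ae_eq_zero (by
      filter_upwards [hf0] with ω hω using ENNReal.ofReal_eq_zero.2 (neg_nonpos.2 hω))
  rw [eE, hneg, ← ofReal_integral_eq_lintegral_ofReal hf hf0, EReal.coe_ennreal_ofReal,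
    max_eq_left (integral_nonneg_of_ae hf0)]
  simp

section Monotone

variable (hmono : ∀ X Y : Ω → ℝ, MemLinf μ X → MemLinf μ Y → X ≤ᵐ[μ] Y → φ X ≤ φ Y)
include hmono

lemma setIntegral_nonneg_of_conj_lt_top {Z : Ω → ℝ} (hconj : conj μ φ Z < ⊤)
    {s : Set Ω} (hs : MeasurableSet s) :
    0 ≤ ∫ ω in s, Z ω ∂μ := by
  obtain ⟨c, hc⟩ : ∃ c : ℝ, conj μ φ Z ≤ c := ⟨_, EReal.le_coe_toReal hconj.ne⟩
  have hbound : ∀ t : ℝ, 0 ≤ t → t * -(∫ ω in s, Z ω ∂μ) ≤ c + φ 0 := by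
    intro t ht
    set X := s.indicator fun _ => -t
    have hX : MemLinf μ X := (memLp_top_const (-t)).indicator hs
    have hXZ : ∫ ω, X ω * Z ω ∂μ = t * -(∫ ω in s, Z ω ∂μ) := by
      simp_rw [X, ← Set.indicator_mul_left, integral_indicator hs, integral_const_mul]
      ring
    have hφX : φ X ≤ φ 0 := hmono X 0 hX MemLp.zero (ae_of_all _
      (Set.indicator_nonpos fun _ _ => neg_nonpos.2 ht))
    have hle := EReal.coe_le_coe_iff.1 ((integral_mul_sub_le_conj hX Z).trans hc)
    linarith
  by_contra! hneg
  obtain ⟨n, hn⟩ := exists_nat_gt ((c + φ 0) / -(∫ ω in s, Z ω ∂μ))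
  rw [div_lt_iff₀ (neg_pos.2 hneg)] at hn
  linarith [hbound n n.cast_nonneg]

lemma ae_nonneg_of_conj_lt_top {Z : Ω → ℝ} (hZ : Integrable Z μ) (hconj : conj μ φ Z < ⊤) :
    0 ≤ᵐ[μ] Z :=
  ae_nonneg_of_forall_setIntegral_nonneg hZ fun _ hs _ =>
    setIntegral_nonneg_of_conj_lt_top hmono hconj hs

lemma mul_integral_abs_sub_le_conj_div {U Z : Ω → ℝ} (hU : AEStronglyMeasurable U μ)
    (hU1 : ∀ᵐ ω ∂μ, 1 ≤ U ω) (hZ : Integrable Z μ) {α K : ℝ} (hα : 0 ≤ α)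
    (hK : hatphi μ φ (fun ω => α * |U ω|) ≤ K) :
    ((α * ∫ ω, |Z ω| ∂μ - K : ℝ) : EReal) ≤ conj μ φ (fun ω => Z ω / U ω) := by
  set Z' := fun ω => Z ω / U ω
  rcases eq_or_ne (conj μ φ Z') ⊤ with htop | hfin
  · simp [htop]
  have hZ'meas : AEStronglyMeasurable Z' μ :=
    (hZ.aemeasurable.div hU.aemeasurable).aestronglyMeasurable
  have hZ'int : Integrable Z' μ := hZ.mono hZ'meas (by
    filter_upwards [hU1] with ω hω
    simp only [Z', norm_div]
    exact div_le_self (norm_nonneg _) (hω.trans (Real.le_norm_self _)))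
  have hZ0 : 0 ≤ᵐ[μ] Z := by
    filter_upwards [ae_nonneg_of_conj_lt_top hmono hZ'int hfin.lt_top, hU1] with ω hq hω
    exact (div_nonneg_iff.1 hq).elim (·.1) fun h => absurd h.2 (by linarith)
  have hprod : (fun ω => α * |U ω| * Z' ω) =ᵐ[μ] fun ω => α * |Z ω| := by
    filter_upwards [hZ0, hU1] with ω hZω hω
    simp only [Z', abs_of_nonneg hZω, abs_of_pos (zero_lt_one.trans_le hω)]
    field_simp
  have hE : eE μ (fun ω => α * |U ω| * Z' ω) = ((α * ∫ ω, |Z ω| ∂μ : ℝ) : EReal) := by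
    rw [eE_congr_ae hprod, eE_eq_integral (hZ.abs.const_mul α)
      (ae_of_all _ fun ω => by positivity), integral_const_mul]
  have hFY := (eE_mul_sub_conj_le_hatphi ⟨hZ'int, hfin.lt_top⟩ fun ω => α * |U ω|).trans hK
  rw [hE, EReal.sub_le_iff_le_add (.inr (EReal.coe_ne_top K)) (.inr (EReal.coe_ne_bot K))]
    at hFY
  rw [EReal.coe_sub, EReal.sub_le_iff_le_add (.inl (EReal.coe_ne_bot K))
    (.inl (EReal.coe_ne_top K)), add_comm]
  exact hFY

end Monotone

end Conjugate

theorem stmt15_general (μ : Measure Ω)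
    (φ₀ : (Ω → ℝ) → ℝ) (h : Standing μ φ₀)
    (U : Ω → ℝ) (hU : MemM μ φ₀ U) (hU1 : ∀ᵐ ω ∂μ, 1 ≤ U ω) :
    ∀ C : ℝ, ∃ R : ℝ, ∀ Z : Ω → ℝ, Integrable Z μ →
      R ≤ ∫ ω, |Z ω| ∂μ →
      ((C * ∫ ω, |Z ω| ∂μ : ℝ) : EReal) ≤ conj μ φ₀ (fun ω => Z ω / U ω) := by
  intro C
  set α := max C 0 + 1
  set K := (hatphi μ φ₀ fun ω => α * |U ω|).toReal
  have hK := EReal.le_coe_toReal (hU.2 α (by positivity)).ne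
  refine ⟨K, fun Z hZ hKZ => ?_⟩
  have hZ0 : 0 ≤ ∫ ω, |Z ω| ∂μ := integral_nonneg fun ω => abs_nonneg _
  calc ((C * ∫ ω, |Z ω| ∂μ : ℝ) : EReal) ≤ ((α * ∫ ω, |Z ω| ∂μ - K : ℝ) : EReal) :=
        EReal.coe_le_coe_iff.2 (by nlinarith [le_max_left C 0])
    _ ≤ conj μ φ₀ (fun ω => Z ω / U ω) :=
        mul_integral_abs_sub_le_conj_div h.mc.mono hU.1 hU1 hZ (by positivity) hK

/-- for `U ∈ M^φ̂` with `U ≥ 1` a.s., the function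
`g_U(Z) = φ₀*(Z/U)` is coercive on `L¹`: `g_U(Z)/‖Z‖₁ → ∞` as `‖Z‖₁ → ∞`. -/
theorem stmt15 (μ : Measure Ω) [IsProbabilityMeasure μ]
    (φ₀ : (Ω → ℝ) → ℝ) (h : Standing μ φ₀)
    (U : Ω → ℝ) (hU : MemM μ φ₀ U) (hU1 : ∀ᵐ ω ∂μ, 1 ≤ U ω) :
    ∀ C : ℝ, ∃ R : ℝ, ∀ Z : Ω → ℝ, Integrable Z μ →
      R ≤ ∫ ω, |Z ω| ∂μ →
      ((C * ∫ ω, |Z ω| ∂μ : ℝ) : EReal) ≤ conj μ φ₀ (fun ω => Z ω / U ω) :=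
  stmt15_general μ φ₀ h U hU hU1

end MaxLebExt
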